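/- Let M = [[h^{-1/4}, 0],[0, h^{1/4}]] for a positive definite operator h on ℝ^n, and let σ(f,g) = (Jf, g) with J = [[0,−I],[I,0]]. Then M is symplectic, and consequently for any β > 0 and vectors f, g in the domain of M_β: σ(f,g)² ≤ ‖M_β f‖² · ‖M_β g‖², where M_β = [[h^{-1/4}coth(βh^{1/2})^{1/2}, 0],[0, h^{1/4}coth(βh^{1/2})^{1/2}]] satisfies ‖Mf‖ ≤ ‖M_β f‖. -/

import Mathlib

open Matrix

section helpers
variable {n : Type*} [Fintype n] [DecidableEq n]

omit [DecidableEq n] in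
lemma dot_mulVec_left' (A : Matrix n n ℝ) (x y : n → ℝ) :
    dotProduct (A.mulVec x) y = dotProduct x (Aᵀ.mulVec y) := by
  rw [dotProduct_comm, Matrix.dotProduct_mulVec, dotProduct_comm,
    Matrix.mulVec_transpose]

lemma dot_conj' (O : Matrix n n ℝ) (hO : Oᵀ * O = 1) (d : n → ℝ) (w : n → ℝ) :
    dotProduct ((O * Matrix.diagonal d * Oᵀ).mulVec w)
      ((O * Matrix.diagonal d * Oᵀ).mulVec w)
    = ∑ k, d k ^ 2 * (Oᵀ.mulVec w k) ^ 2 := by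
  have h1 : (O * Matrix.diagonal d * Oᵀ).mulVec w
      = O.mulVec ((Matrix.diagonal d).mulVec (Oᵀ.mulVec w)) := by
    rw [Matrix.mulVec_mulVec, Matrix.mulVec_mulVec]
  rw [h1, dot_mulVec_left']
  rw [show Oᵀ.mulVec (O.mulVec ((Matrix.diagonal d).mulVec (Oᵀ.mulVec w)))
      = (Oᵀ * O).mulVec ((Matrix.diagonal d).mulVec (Oᵀ.mulVec w)) from
    Matrix.mulVec_mulVec .., hO, Matrix.one_mulVec]
  simp only [dotProduct, Matrix.mulVec_diagonal]
  exact Finset.sum_congr rfl fun k _ => by ring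

omit [DecidableEq n] in
lemma block_dot' (A B : Matrix n n ℝ) (f : n ⊕ n → ℝ) :
    dotProduct ((Matrix.fromBlocks A 0 0 B).mulVec f)
      ((Matrix.fromBlocks A 0 0 B).mulVec f)
    = dotProduct (A.mulVec (f ∘ Sum.inl)) (A.mulVec (f ∘ Sum.inl))
      + dotProduct (B.mulVec (f ∘ Sum.inr)) (B.mulVec (f ∘ Sum.inr)) := by
  rw [Matrix.fromBlocks_mulVec]
  simp [sumElim_dotProduct_sumElim]

lemma conj_mul_conj' (O : Matrix n n ℝ) (hO : Oᵀ * O = 1) (a b : n → ℝ) :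
    (O * Matrix.diagonal a * Oᵀ) * (O * Matrix.diagonal b * Oᵀ)
      = O * Matrix.diagonal (fun k => a k * b k) * Oᵀ := by
  have h : O * Matrix.diagonal a * Oᵀ * (O * Matrix.diagonal b * Oᵀ)
      = O * (Matrix.diagonal a * (Oᵀ * O) * Matrix.diagonal b) * Oᵀ := by
    noncomm_ring
  rw [h, hO, Matrix.mul_one, Matrix.diagonal_mul_diagonal]

lemma conj_transpose'' (O : Matrix n n ℝ) (d : n → ℝ) :
    (O * Matrix.diagonal d * Oᵀ)ᵀ = O * Matrix.diagonal d * Oᵀ := by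
  simp [Matrix.transpose_mul, Matrix.mul_assoc]

omit [DecidableEq n] in
lemma dot_self_nonneg' (v : n → ℝ) : 0 ≤ dotProduct v v :=
  Finset.sum_nonneg fun i _ => mul_self_nonneg _

omit [DecidableEq n] in
lemma cauchy' (u v : n → ℝ) :
    (dotProduct u v) ^ 2 ≤ dotProduct u u * dotProduct v v := by
  have := Finset.sum_mul_sq_le_sq_mul_sq Finset.univ u v
  simpa [dotProduct, sq] using this

end helpers

noncomputable def Mmat {n : Type*} [Fintype n] [DecidableEq n]
    (O : Matrix n n ℝ) (γ : n → ℝ) : Matrix (n ⊕ n) (n ⊕ n) ℝ :=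
  Matrix.fromBlocks
    (O * (Matrix.diagonal fun k => (Real.sqrt (γ k))⁻¹) * Oᵀ) 0 0
    (O * (Matrix.diagonal fun k => Real.sqrt (γ k)) * Oᵀ)

noncomputable def Mbeta {n : Type*} [Fintype n] [DecidableEq n]
    (O : Matrix n n ℝ) (γ : n → ℝ) (β : ℝ) : Matrix (n ⊕ n) (n ⊕ n) ℝ :=
  Matrix.fromBlocks
    (O * (Matrix.diagonal fun k => (Real.sqrt (γ k))⁻¹ *
        Real.sqrt (Real.cosh (β * γ k) / Real.sinh (β * γ k))) * Oᵀ)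
    0 0
    (O * (Matrix.diagonal fun k => Real.sqrt (γ k) *
        Real.sqrt (Real.cosh (β * γ k) / Real.sinh (β * γ k))) * Oᵀ)

/-- `M` is symplectic, `‖Mf‖ ≤ ‖M_β f‖`, and consequently
`σ(f,g)² ≤ ‖M_β f‖² ‖M_β g‖²` where `σ(f,g) = (Jf, g)`. -/
theorem stmt_15 {n : Type*} [Fintype n] [DecidableEq n]
    (O : Matrix n n ℝ) (hO : O * Oᵀ = 1 ∧ Oᵀ * O = 1)
    (γ : n → ℝ) (hγ : ∀ k, 0 < γ k) (β : ℝ) (hβ : 0 < β) :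
    (Mmat O γ * Matrix.fromBlocks (0 : Matrix n n ℝ) (-1) 1 0 * (Mmat O γ)ᵀ =
        Matrix.fromBlocks (0 : Matrix n n ℝ) (-1) 1 0) ∧
      (∀ f : n ⊕ n → ℝ,
        dotProduct ((Mmat O γ).mulVec f) ((Mmat O γ).mulVec f) ≤
          dotProduct ((Mbeta O γ β).mulVec f) ((Mbeta O γ β).mulVec f)) ∧
      ∀ f g : n ⊕ n → ℝ,
        (dotProduct ((Matrix.fromBlocks (0 : Matrix n n ℝ) (-1) 1 0).mulVec f) g) ^ 2 ≤
          dotProduct ((Mbeta O γ β).mulVec f) ((Mbeta O γ β).mulVec f) *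
            dotProduct ((Mbeta O γ β).mulVec g) ((Mbeta O γ β).mulVec g) := by
  obtain ⟨hO1, hO2⟩ := hO
  set a : n → ℝ := fun k => (Real.sqrt (γ k))⁻¹ with ha
  set b : n → ℝ := fun k => Real.sqrt (γ k) with hb
  have hsq : ∀ k, 0 < Real.sqrt (γ k) := fun k => Real.sqrt_pos.2 (hγ k)
  have hAB : (O * Matrix.diagonal a * Oᵀ) * (O * Matrix.diagonal b * Oᵀ) = 1 := by
    rw [conj_mul_conj' O hO2]
    have : (fun k => a k * b k) = fun _ => (1 : ℝ) := by
      funext k; exact inv_mul_cancel₀ (hsq k).ne'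
    rw [this, Matrix.diagonal_one, Matrix.mul_one, hO1]
  have hBA : (O * Matrix.diagonal b * Oᵀ) * (O * Matrix.diagonal a * Oᵀ) = 1 := by
    rw [conj_mul_conj' O hO2]
    have : (fun k => b k * a k) = fun _ => (1 : ℝ) := by
      funext k; exact mul_inv_cancel₀ (hsq k).ne'
    rw [this, Matrix.diagonal_one, Matrix.mul_one, hO1]
  simp only [Matrix.mul_assoc] at hAB hBA
  have hMsym : (Mmat O γ)ᵀ = Mmat O γ := by
    simp [Mmat, Matrix.fromBlocks_transpose, conj_transpose'', Matrix.mul_assoc]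
  have hsymp : Mmat O γ * Matrix.fromBlocks (0 : Matrix n n ℝ) (-1) 1 0 * (Mmat O γ)ᵀ =
      Matrix.fromBlocks (0 : Matrix n n ℝ) (-1) 1 0 := by
    rw [hMsym]
    simp [Mmat, Matrix.fromBlocks_multiply, hAB, hBA, ← ha, ← hb, Matrix.mul_assoc]
  -- coth ≥ 1
  have hc : ∀ k, (1 : ℝ) ≤ Real.cosh (β * γ k) / Real.sinh (β * γ k) := by
    intro k
    have hs : 0 < Real.sinh (β * γ k) := Real.sinh_pos_iff.2 (mul_pos hβ (hγ k))
    have hle' : Real.sinh (β * γ k) ≤ Real.cosh (β * γ k) := by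
      rw [Real.sinh_eq, Real.cosh_eq]
      nlinarith [Real.exp_pos (-(β * γ k))]
    exact (one_le_div hs).2 hle'
  have hcs : ∀ k, Real.sqrt (Real.cosh (β * γ k) / Real.sinh (β * γ k)) ^ 2
      = Real.cosh (β * γ k) / Real.sinh (β * γ k) := fun k =>
    Real.sq_sqrt (le_trans zero_le_one (hc k))
  -- part 2
  have hle : ∀ f : n ⊕ n → ℝ,
      dotProduct ((Mmat O γ).mulVec f) ((Mmat O γ).mulVec f) ≤
        dotProduct ((Mbeta O γ β).mulVec f) ((Mbeta O γ β).mulVec f) := by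
    intro f
    rw [Mmat, Mbeta, block_dot', block_dot', dot_conj' O hO2, dot_conj' O hO2,
      dot_conj' O hO2, dot_conj' O hO2]
    have key : ∀ (d : n → ℝ) (w : n → ℝ),
        ∑ k, d k ^ 2 * w k ^ 2 ≤
        ∑ k, (d k * Real.sqrt (Real.cosh (β * γ k) / Real.sinh (β * γ k))) ^ 2 * w k ^ 2 := by
      intro d w
      refine Finset.sum_le_sum fun k _ => ?_
      have h1 := hc k
      have h2 := hcs k
      nlinarith [sq_nonneg (d k), sq_nonneg (w k), sq_nonneg (d k * w k)]
    exact add_le_add (key a _) (key b _)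
  refine ⟨hsymp, hle, fun f g => ?_⟩
  -- part 3
  set J : Matrix (n ⊕ n) (n ⊕ n) ℝ := Matrix.fromBlocks (0 : Matrix n n ℝ) (-1) 1 0 with hJ
  have hJJ : Jᵀ * J = 1 := by
    simp [hJ, Matrix.fromBlocks_transpose, Matrix.fromBlocks_multiply,
      ← Matrix.fromBlocks_one]
  have hJdot : ∀ x : n ⊕ n → ℝ,
      dotProduct (J.mulVec x) (J.mulVec x) = dotProduct x x := by
    intro x
    rw [dot_mulVec_left', Matrix.mulVec_mulVec, hJJ, Matrix.one_mulVec]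
  have hsigma : dotProduct (J.mulVec f) g
      = dotProduct (J.mulVec ((Mmat O γ).mulVec f)) ((Mmat O γ).mulVec g) := by
    conv_lhs => rw [← hsymp]
    rw [← Matrix.mulVec_mulVec, ← Matrix.mulVec_mulVec, dot_mulVec_left', hMsym,
      dot_mulVec_left' J]
  have cs := cauchy' (J.mulVec ((Mmat O γ).mulVec f)) ((Mmat O γ).mulVec g)
  rw [hJdot] at cs
  calc (dotProduct (J.mulVec f) g) ^ 2
      = (dotProduct (J.mulVec ((Mmat O γ).mulVec f)) ((Mmat O γ).mulVec g)) ^ 2 := by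
        rw [hsigma]
    _ ≤ dotProduct ((Mmat O γ).mulVec f) ((Mmat O γ).mulVec f) *
        dotProduct ((Mmat O γ).mulVec g) ((Mmat O γ).mulVec g) := cs
    _ ≤ _ := by
        exact mul_le_mul (hle f) (hle g) (dot_self_nonneg' _)
          (le_trans (dot_self_nonneg' _) (hle f))
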